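/- arXiv:0811.3854 — 4 statements merged into one kernel-verified Lean document; each statement's English description precedes it below -/
import Mathlib

section
/- If M is a nonzero finitely generated graded module over the polynomial ring S = k[X_0,...,X_n] of projective dimension m, then Ext^m_S(M, S) ≠ 0. -/
open CategoryTheory

universe u

/-- `Ext^i_R(M, N)` for modules over a commutative ring. -/
noncomputable abbrev extModule (R : Type u) [CommRing R] (M N : ModuleCat.{u} R) (i : ℕ) :=
  ((Ext R (ModuleCat.{u} R) i).obj (Opposite.op M)).obj N

/-!
If `pd M = 0`, then `M` is a nonzero projective module and so has a nonzero functional. Otherwise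
choose a presentation `0 → K → Rʳ → M → 0`; `K` is finitely generated as `R` is Noetherian, and
dimension shifting gives `Extʲ⁺²(M, -) ≅ Extʲ⁺¹(K, -)`, which reduces to `pd M = 1`. Then `K` is
finitely generated projective, hence a retract of some `Rˢ`, so `Ext¹(M, R) = 0` would force
`Ext¹(M, K) = 0`: the presentation would split and `M` would be projective.
-/

namespace ExtModule

open Limits

variable {R : Type u} [CommRing R]

lemma subsingleton_iff_exactAt {A : ModuleCat.{u} R} (P : ProjectiveResolution A)
    (Y : ModuleCat.{u} R) (n : ℕ) :
    Subsingleton (extModule R A Y n) ↔ (P.complex.linearYonedaObj R Y).ExactAt n := by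
  rw [← ModuleCat.isZero_iff_subsingleton, HomologicalComplex.exactAt_iff_isZero_homology]
  exact (P.isoExt n Y).isZero_iff

lemma subsingleton_zero_iff {A : ModuleCat.{u} R} (P : ProjectiveResolution A)
    (Y : ModuleCat.{u} R) :
    Subsingleton (extModule R A Y 0) ↔
      ∀ g : P.complex.X 0 ⟶ Y, P.complex.d 1 0 ≫ g = 0 → g = 0 := by
  rw [subsingleton_iff_exactAt P, HomologicalComplex.exactAt_iff' _ 0 0 1 (by simp) (by simp),
    ShortComplex.moduleCat_exact_iff]
  have hd : (P.complex.linearYonedaObj R Y).d 0 0 = 0 := HomologicalComplex.shape _ _ _ (by simp)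
  change (∀ g, _ → ∃ h, (P.complex.linearYonedaObj R Y).d 0 0 h = g) ↔ _
  simp only [hd, ModuleCat.hom_zero, LinearMap.zero_apply, exists_const]
  simp only [eq_comm (a := (0 : (P.complex.linearYonedaObj R Y).X 0))]
  rfl

lemma subsingleton_zero_iff_of_projective (A Y : ModuleCat.{u} R) [Projective A] :
    Subsingleton (extModule R A Y 0) ↔ Subsingleton (A ⟶ Y) := by
  rw [subsingleton_zero_iff (ProjectiveResolution.self A)]
  have hd : (ProjectiveResolution.self A).complex.d 1 0 = 0 :=
    HomologicalComplex.single_obj_d _ _ _ _ _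
  simp only [hd, zero_comp, forall_const]
  exact (subsingleton_iff_forall_eq (0 : A ⟶ Y)).symm

lemma subsingleton_succ_iff {A : ModuleCat.{u} R} (P : ProjectiveResolution A)
    (Y : ModuleCat.{u} R) (n : ℕ) :
    Subsingleton (extModule R A Y (n + 1)) ↔ ∀ g : P.complex.X (n + 1) ⟶ Y,
      P.complex.d (n + 2) (n + 1) ≫ g = 0 → ∃ h : P.complex.X n ⟶ Y,
        P.complex.d (n + 1) n ≫ h = g := by
  rw [subsingleton_iff_exactAt P, HomologicalComplex.exactAt_iff' _ n (n + 1) (n + 2)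
    (by simp) (by simp), ShortComplex.moduleCat_exact_iff]
  rfl

lemma subsingleton_of_retract {A Y Y' : ModuleCat.{u} R} (e : Retract Y' Y) {n : ℕ}
    (h : Subsingleton (extModule R A Y n)) : Subsingleton (extModule R A Y' n) := by
  rw [← ModuleCat.isZero_iff_subsingleton] at h ⊢
  exact IsZero.of_mono (e.map ((Ext R (ModuleCat.{u} R) n).obj (Opposite.op A))).i h

lemma subsingleton_pi {A : ModuleCat.{u} R} {ι : Type} {Y : ι → ModuleCat.{u} R} {n : ℕ}
    (h : ∀ l, Subsingleton (extModule R A (Y l) (n + 1))) :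
    Subsingleton (extModule R A (ModuleCat.of R (∀ l, Y l)) (n + 1)) := by
  let P := ProjectiveResolution.of A
  rw [subsingleton_succ_iff P]
  intro g hg
  have hcomp (l : ι) : ∃ h : P.complex.X n ⟶ Y l,
      P.complex.d (n + 1) n ≫ h = g ≫ ModuleCat.ofHom (LinearMap.proj l) :=
    (subsingleton_succ_iff P _ n).1 (h l) _ (by rw [← Category.assoc, hg, zero_comp])
  choose φ hφ using hcomp
  refine ⟨ModuleCat.ofHom (LinearMap.pi fun l => (φ l).hom), ?_⟩
  ext x l
  exact ConcreteCategory.congr_hom (hφ l) x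

section ShortExact

variable {K F A : ModuleCat.{u} R} (i : K ⟶ F) (p : F ⟶ A)

noncomputable def augmentedComplex (Q : ProjectiveResolution K) :
    ChainComplex (ModuleCat.{u} R) ℕ :=
  Q.complex.augment (Q.π.f 0 ≫ i) (Q.complex_d_comp_π_f_zero_assoc i |>.trans zero_comp)

lemma augmentedComplex_exactAt_succ (hi : Function.Injective i.hom) (Q : ProjectiveResolution K)
    (n : ℕ) : (augmentedComplex i Q).ExactAt (n + 1) := by
  rw [HomologicalComplex.exactAt_iff' _ (n + 2) (n + 1) n (by simp) (by simp),
    ShortComplex.moduleCat_exact_iff]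
  cases n with
  | zero =>
    intro x hx
    exact (ShortComplex.moduleCat_exact_iff _).1 Q.exact₀ x (hi (hx.trans (map_zero i.hom).symm))
  | succ n =>
    exact (ShortComplex.moduleCat_exact_iff _).1
      ((HomologicalComplex.exactAt_iff' Q.complex (n + 2) (n + 1) n (by simp) (by simp)).1
        (Q.complex_exactAt_succ n))

variable (hi : Function.Injective i.hom) (hp : Function.Surjective p.hom)
  (hexact : Function.Exact i.hom p.hom) (Q : ProjectiveResolution K)

include hexact in
lemma augmentedComplex_d_one_zero_comp : (augmentedComplex i Q).d 1 0 ≫ p = 0 := by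
  ext x
  exact hexact.apply_apply_eq_zero _

noncomputable def resolutionOfExact [Projective F] : ProjectiveResolution A where
  complex := augmentedComplex i Q
  projective
    | 0 => inferInstanceAs (Projective F)
    | n + 1 => Q.projective n
  π := (ChainComplex.toSingle₀Equiv _ _).symm
    ⟨p, augmentedComplex_d_one_zero_comp i p hexact Q⟩
  quasiIso := ⟨fun n => by
    cases n with
    | zero =>
      rw [ChainComplex.quasiIsoAt₀_iff, ShortComplex.quasiIso_iff_of_zeros']
      · refine (ShortComplex.exact_and_epi_g_iff_of_iso (?_ : _ ≅
          ShortComplex.mk _ p (augmentedComplex_d_one_zero_comp i p hexact Q))).2 ⟨?_, ?_⟩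
        · exact ShortComplex.isoMk (Iso.refl _) (Iso.refl _) (Iso.refl _)
            (by simp only [Category.id_comp, Category.comp_id]; rfl)
            (by simp [ChainComplex.toSingle₀Equiv]; rfl)
        · rw [ShortComplex.moduleCat_exact_iff]
          intro x hx
          obtain ⟨z, rfl⟩ := (hexact x).1 hx
          obtain ⟨y, rfl⟩ := (ModuleCat.epi_iff_surjective (Q.π.f 0)).1 inferInstance z
          exact ⟨y, rfl⟩
        · exact (ModuleCat.epi_iff_surjective p).2 hp
      all_goals rfl
    | succ n =>
      rw [quasiIsoAt_iff_exactAt' _ _ (ChainComplex.exactAt_succ_single_obj _ _)]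
      exact augmentedComplex_exactAt_succ i hi Q n⟩

variable [Projective F]

include hi hp hexact in
lemma subsingleton_succ_succ_iff (Y : ModuleCat.{u} R) (n : ℕ) :
    Subsingleton (extModule R A Y (n + 2)) ↔ Subsingleton (extModule R K Y (n + 1)) := by
  let Q := ProjectiveResolution.of K
  rw [subsingleton_succ_iff (resolutionOfExact i p hi hp hexact Q), subsingleton_succ_iff Q]
  rfl

include hi hp hexact in
lemma exists_extension {Y : ModuleCat.{u} R} (h : Subsingleton (extModule R A Y 1))
    (φ : K ⟶ Y) : ∃ ψ : F ⟶ Y, i ≫ ψ = φ := by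
  let Q := ProjectiveResolution.of K
  obtain ⟨ψ, hψ⟩ := (subsingleton_succ_iff (resolutionOfExact i p hi hp hexact Q) Y 0).1 h
    (Q.π.f 0 ≫ φ) (Q.complex_d_comp_π_f_zero_assoc φ |>.trans zero_comp)
  refine ⟨ψ, (cancel_epi (Q.π.f 0)).1 ?_⟩
  exact (Category.assoc _ _ _).symm.trans hψ

include hi hp hexact in
lemma projective_of_subsingleton_one (h : Subsingleton (extModule R A K 1)) : Projective A := by
  obtain ⟨ψ, hψ⟩ := exists_extension i p hi hp hexact h (𝟙 K)
  obtain ⟨s, hs⟩ := (hexact.splitSurjectiveEquiv hi).symm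
    (hexact.splitInjectiveEquiv hp ⟨ψ.hom, congrArg ModuleCat.Hom.hom hψ⟩)
  have : Module.Projective R A := Module.Projective.of_split s p.hom hs
  infer_instance

end ShortExact

lemma projective_of_forall_subsingleton_one (A : ModuleCat.{u} R)
    (h : ∀ Y, Subsingleton (extModule R A Y 1)) : Projective A := by
  let f : (A →₀ R) →ₗ[R] A := Finsupp.linearCombination R id
  exact projective_of_subsingleton_one
    (ModuleCat.ofHom (LinearMap.ker f).subtype : ModuleCat.of R (LinearMap.ker f) ⟶ _)
    (ModuleCat.ofHom f : ModuleCat.of R (A →₀ R) ⟶ A) Subtype.val_injective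
    (Finsupp.linearCombination_id_surjective R A) (LinearMap.exact_subtype_ker_map f) (h _)

lemma exists_retract_pi_of_projective (A : ModuleCat.{u} R) [Module.Finite R A] [Projective A] :
    ∃ r : ℕ, Nonempty (Retract A (ModuleCat.of R (Fin r → R))) := by
  obtain ⟨r, f, hf⟩ := Module.Finite.exists_fin' R A
  obtain ⟨s, hs⟩ := Module.projective_lifting_property f LinearMap.id hf
  exact ⟨r, ⟨ModuleCat.ofHom s, ModuleCat.ofHom f, ModuleCat.hom_ext hs⟩⟩

lemma nontrivial_hom_ring_of_projective (A : ModuleCat.{u} R) [Projective A] [Nontrivial A] :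
    Nontrivial (A ⟶ ModuleCat.of R R) := by
  obtain ⟨a, ha⟩ := exists_ne (0 : A)
  obtain ⟨φ, hφ⟩ := not_forall.1 (mt (Module.forall_dual_apply_eq_zero_iff R a).1 ha)
  exact ⟨ModuleCat.ofHom φ, 0, fun h => hφ (ConcreteCategory.congr_hom h a)⟩

lemma exists_finite_syzygy [IsNoetherianRing R] (A : ModuleCat.{u} R) [Module.Finite R A] :
    ∃ (K : ModuleCat.{u} R) (_ : Module.Finite R K) (r : ℕ)
      (i : K ⟶ ModuleCat.of R (Fin r → R)) (p : ModuleCat.of R (Fin r → R) ⟶ A),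
      Function.Injective i.hom ∧ Function.Surjective p.hom ∧ Function.Exact i.hom p.hom := by
  obtain ⟨r, f, hf⟩ := Module.Finite.exists_fin' R A
  exact ⟨ModuleCat.of R (LinearMap.ker f), inferInstance, r,
    ModuleCat.ofHom (LinearMap.ker f).subtype, ModuleCat.ofHom f, Subtype.val_injective, hf,
    LinearMap.exact_subtype_ker_map f⟩

theorem forall_subsingleton_of_subsingleton_ring [IsNoetherianRing R] (m : ℕ)
    (A : ModuleCat.{u} R) [Module.Finite R A]
    (hA : ∀ Y, Subsingleton (extModule R A Y (m + 2)))
    (hR : Subsingleton (extModule R A (ModuleCat.of R R) (m + 1))) (Y : ModuleCat.{u} R) :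
    Subsingleton (extModule R A Y (m + 1)) := by
  induction m generalizing A Y with
  | zero =>
    obtain ⟨K, _, r, i, p, hi, hp, hexact⟩ := exists_finite_syzygy A
    have shift := subsingleton_succ_succ_iff i p hi hp hexact
    have : Projective K := projective_of_forall_subsingleton_one K fun Y => (shift Y 0).1 (hA Y)
    obtain ⟨r', ⟨e⟩⟩ := exists_retract_pi_of_projective K
    have : Projective A := projective_of_subsingleton_one i p hi hp hexact
      (subsingleton_of_retract e (subsingleton_pi fun (_ : Fin r') => hR))
    exact ModuleCat.subsingleton_of_isZero (isZero_Ext_succ_of_projective A Y 0)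
  | succ m ih =>
    obtain ⟨K, _, r, i, p, hi, hp, hexact⟩ := exists_finite_syzygy A
    have shift := subsingleton_succ_succ_iff i p hi hp hexact
    exact (shift Y m).2 (ih K (fun Y => (shift Y (m + 1)).1 (hA Y)) ((shift _ m).1 hR) Y)

end ExtModule

theorem statement0_general {k : Type u} [Field k] (n : ℕ)
    (M : Type u) [AddCommGroup M] [Module (MvPolynomial (Fin (n + 1)) k) M]
    -- `M` is finitely generated and nonzero
    [Module.Finite (MvPolynomial (Fin (n + 1)) k) M] (hM : Nontrivial M)
    -- `M` has projective dimension `m`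
    (m : ℕ)
    (hpdle : ∀ (j : ℕ), m < j → ∀ N : ModuleCat.{u} (MvPolynomial (Fin (n + 1)) k),
      Subsingleton (extModule _ (ModuleCat.of _ M) N j))
    (hpdgt : ∀ m' : ℕ, m' < m → ∃ N : ModuleCat.{u} (MvPolynomial (Fin (n + 1)) k),
      ¬ Subsingleton (extModule _ (ModuleCat.of _ M) N (m' + 1))) :
    ¬ Subsingleton
      (extModule (MvPolynomial (Fin (n + 1)) k) (ModuleCat.of _ M)
        (ModuleCat.of _ (MvPolynomial (Fin (n + 1)) k)) m) := by
  cases m with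
  | zero =>
    have : Projective (ModuleCat.of _ M) :=
      ExtModule.projective_of_forall_subsingleton_one _ (hpdle 1 Nat.one_pos)
    rw [ExtModule.subsingleton_zero_iff_of_projective, ← not_nontrivial_iff_subsingleton, not_not]
    exact ExtModule.nontrivial_hom_ring_of_projective _
  | succ m =>
    intro hR
    obtain ⟨N, hN⟩ := hpdgt m m.lt_add_one
    exact hN (ExtModule.forall_subsingleton_of_subsingleton_ring m _
      (hpdle (m + 2) (by omega)) hR N)

/-- If `M` is a nonzero finitely generated graded module over the polynomial
ring `S = k[X_0, …, X_n]` of projective dimension `m`, then `Ext^m_S(M, S) ≠ 0`.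
Here "projective dimension `m`" is expressed by the standard characterization via
vanishing of Ext: `Ext^{j}(M, −) = 0` for all `j > m`, and for every `m' < m` there is
some module `N` with `Ext^{m'+1}(M, N) ≠ 0`. -/
theorem statement0 {k : Type u} [Field k] (n : ℕ)
    (M : Type u) [AddCommGroup M] [Module (MvPolynomial (Fin (n + 1)) k) M]
    -- `M` is graded: a decomposition into homogeneous components, compatible with the
    -- standard grading of `S = k[X_0, …, X_n]`
    (ℳ : ℤ → AddSubgroup M) [DirectSum.Decomposition ℳ]
    (hgradeX : ∀ (i : Fin (n + 1)) (d : ℤ), ∀ x ∈ ℳ d,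
      (MvPolynomial.X i : MvPolynomial (Fin (n + 1)) k) • x ∈ ℳ (d + 1))
    (hgradeC : ∀ (c : k) (d : ℤ), ∀ x ∈ ℳ d,
      (MvPolynomial.C c : MvPolynomial (Fin (n + 1)) k) • x ∈ ℳ d)
    -- `M` is finitely generated and nonzero
    [Module.Finite (MvPolynomial (Fin (n + 1)) k) M] (hM : Nontrivial M)
    -- `M` has projective dimension `m`
    (m : ℕ)
    (hpdle : ∀ (j : ℕ), m < j → ∀ N : ModuleCat.{u} (MvPolynomial (Fin (n + 1)) k),
      Subsingleton (extModule _ (ModuleCat.of _ M) N j))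
    (hpdgt : ∀ m' : ℕ, m' < m → ∃ N : ModuleCat.{u} (MvPolynomial (Fin (n + 1)) k),
      ¬ Subsingleton (extModule _ (ModuleCat.of _ M) N (m' + 1))) :
    ¬ Subsingleton
      (extModule (MvPolynomial (Fin (n + 1)) k) (ModuleCat.of _ M)
        (ModuleCat.of _ (MvPolynomial (Fin (n + 1)) k)) m) :=
  statement0_general n M hM m hpdle hpdgt
end

section
/- Basic Perturbation Lemma: Let (f, g, h) be a contraction of a complex X• onto a complex Y• in an additive category, i.e., f: X• → Y• and g: Y• → X• are chain maps with fg = id_Y, id_X − gf = d_X h + h d_X, and the side conditions fh = 0, hg = 0, h² = 0 hold. Let d̂_X = d_X + d'_X be a perturbation of d_X (meaning d̂_X ∘ d̂_X = 0). If id_X + h d'_X is invertible in the ring Hom^0(X•, X•), then there exist a perturbation d̂_Y = d_Y + d'_Y of d_Y and a contraction (f̂, ĝ, ĥ) of the complex (X^p, d̂_X) onto the complex (Y^p, d̂_Y). -/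
open CategoryTheory

set_option maxHeartbeats 2000000 in
/-- the Basic Perturbation Lemma.  Let `(f, g, h)` be a contraction of a
cochain complex `X•` onto a cochain complex `Y•` in an additive category
(`h p : X^{p+1} ⟶ X^p` is the degree `-1` homotopy operator), i.e. `fg = id_Y`,
`id_X − gf = d_X h + h d_X`, `fh = 0`, `hg = 0`, `h² = 0`.  Let `d'_X` be a perturbation
of `d_X`, i.e. `(d_X + d'_X) ∘ (d_X + d'_X) = 0`.  If `id_X + h d'_X` is invertible in
the ring `Hom^0(X•, X•)` (equivalently, degreewise invertible), then there exist a
perturbation `d_Y + d'_Y` of `d_Y` and a contraction `(f̂, ĝ, ĥ)` of the perturbed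
complex `(X^p, d_X + d'_X)` onto the perturbed complex `(Y^p, d_Y + d'_Y)`. -/
theorem statement9 {C : Type*} [Category C] [Preadditive C]
    (X Y : CochainComplex C ℤ) (f : X ⟶ Y) (g : Y ⟶ X)
    (h : ∀ p : ℤ, X.X (p + 1) ⟶ X.X p)
    (hfg : ∀ p : ℤ, g.f p ≫ f.f p = 𝟙 (Y.X p))
    (hgf : ∀ p : ℤ, 𝟙 (X.X p) - f.f p ≫ g.f p =
      X.d p (p + 1) ≫ h p + eqToHom (by ring_nf) ≫ h (p - 1) ≫ X.d (p - 1) p)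
    (hfh : ∀ p : ℤ, h p ≫ f.f p = 0)
    (hhg : ∀ p : ℤ, g.f (p + 1) ≫ h p = 0)
    (hhh : ∀ p : ℤ, h (p + 1) ≫ h p = 0)
    -- the perturbation `d'_X` of `d_X`
    (d' : ∀ p : ℤ, X.X p ⟶ X.X (p + 1))
    (hd' : ∀ p : ℤ, (X.d p (p + 1) + d' p) ≫ (X.d (p + 1) (p + 1 + 1) + d' (p + 1)) = 0)
    -- `id_X + h d'_X` is invertible in the ring `Hom^0(X•, X•)`
    (hinv : ∀ p : ℤ, IsIso (𝟙 (X.X p) + d' p ≫ h p)) :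
    -- conclusion: a perturbation of `d_Y` and a contraction of the perturbed complexes
    ∃ (dY' : ∀ p : ℤ, Y.X p ⟶ Y.X (p + 1))
      (fh : ∀ p : ℤ, X.X p ⟶ Y.X p) (gh : ∀ p : ℤ, Y.X p ⟶ X.X p)
      (hh : ∀ p : ℤ, X.X (p + 1) ⟶ X.X p),
      -- `d̂_Y = d_Y + d'_Y` is a differential
      (∀ p : ℤ, (Y.d p (p + 1) + dY' p) ≫ (Y.d (p + 1) (p + 1 + 1) + dY' (p + 1)) = 0) ∧
      -- `f̂` and `ĝ` are chain maps for the perturbed differentials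
      (∀ p : ℤ, (X.d p (p + 1) + d' p) ≫ fh (p + 1) = fh p ≫ (Y.d p (p + 1) + dY' p)) ∧
      (∀ p : ℤ, (Y.d p (p + 1) + dY' p) ≫ gh (p + 1) = gh p ≫ (X.d p (p + 1) + d' p)) ∧
      -- `(f̂, ĝ, ĥ)` is a contraction of `X̂•` onto `Ŷ•`
      (∀ p : ℤ, gh p ≫ fh p = 𝟙 (Y.X p)) ∧
      (∀ p : ℤ, 𝟙 (X.X p) - fh p ≫ gh p =
        (X.d p (p + 1) + d' p) ≫ hh p +
          eqToHom (by ring_nf) ≫ hh (p - 1) ≫ (X.d (p - 1) p + d' (p - 1) ≫ eqToHom (by ring_nf))) ∧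
      (∀ p : ℤ, hh p ≫ fh p = 0) ∧
      (∀ p : ℤ, gh (p + 1) ≫ hh p = 0) ∧
      (∀ p : ℤ, hh (p + 1) ≫ hh p = 0) := by
  choose K hwK hKw using fun p => (hinv p).out
  -- cast helpers
  have castH : ∀ (a b : ℤ), a = b → ∀ (E : X.X (b+1) = X.X (a+1)) (c : ℤ),
      eqToHom E ≫ h a ≫ X.d a c = h b ≫ X.d b c := by
    rintro a b rfl E c; simp
  have castF : ∀ (a b : ℤ), a = b → ∀ (E1 : X.X (b+1) = X.X (a+1)) (E2 : X.X (a+1) = X.X (b+1)),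
      eqToHom E1 ≫ h a ≫ K a ≫ d' a ≫ eqToHom E2 ≫ f.f (b+1) =
        h b ≫ K b ≫ d' b ≫ f.f (b+1) := by
    rintro a b rfl E1 E2; simp
  have castHH : ∀ (a b : ℤ), a = b → ∀ (E1 : X.X (b+1) = X.X (a+1)) (E2 : X.X (a+1) = X.X (b+1)),
      eqToHom E1 ≫ (h a ≫ K a) ≫ (X.d a (b+1) + d' a ≫ eqToHom E2) =
        (h b ≫ K b) ≫ (X.d b (b+1) + d' b) := by
    rintro a b rfl E1 E2; simp
  -- clean homotopy
  have hgf1 : ∀ q : ℤ, 𝟙 (X.X (q+1)) - f.f (q+1) ≫ g.f (q+1) =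
      X.d (q+1) (q+1+1) ≫ h (q+1) + h q ≫ X.d q (q+1) := by
    intro q
    have H := hgf (q+1)
    rw [castH (q+1-1) q (by ring)] at H
    exact H
  -- basic identities for K
  have htK : ∀ p : ℤ, d' p ≫ h p ≫ K p = 𝟙 (X.X p) - K p := by
    intro p
    rw [← sub_eq_zero]
    trans ((𝟙 (X.X p) + d' p ≫ h p) ≫ K p - 𝟙 (X.X p))
    · simp only [Preadditive.add_comp, Preadditive.sub_comp, Preadditive.comp_add,
        Preadditive.comp_sub, Category.assoc, Category.id_comp, Category.comp_id]
      abel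
    · rw [hwK p]; abel
  have hKt : ∀ p : ℤ, K p ≫ d' p ≫ h p = 𝟙 (X.X p) - K p := by
    intro p
    rw [← sub_eq_zero]
    trans (K p ≫ (𝟙 (X.X p) + d' p ≫ h p) - 𝟙 (X.X p))
    · simp only [Preadditive.add_comp, Preadditive.sub_comp, Preadditive.comp_add,
        Preadditive.comp_sub, Category.assoc, Category.id_comp, Category.comp_id]
      abel
    · rw [hKw p]; abel
  have hL6 : ∀ p : ℤ, K (p+1) ≫ h p = h p := by
    intro p
    have u1 : (K (p+1) ≫ d' (p+1) ≫ h (p+1)) ≫ h p = (𝟙 (X.X (p+1)) - K (p+1)) ≫ h p := by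
      rw [hKt (p+1)]
    have u2 : K (p+1) ≫ d' (p+1) ≫ (h (p+1) ≫ h p) =
        K (p+1) ≫ d' (p+1) ≫ (0 : X.X (p+1+1) ⟶ X.X p) := by rw [hhh p]
    rw [← sub_eq_zero]
    trans (((K (p+1) ≫ d' (p+1) ≫ h (p+1)) ≫ h p - (𝟙 (X.X (p+1)) - K (p+1)) ≫ h p) -
      (K (p+1) ≫ d' (p+1) ≫ (h (p+1) ≫ h p) - K (p+1) ≫ d' (p+1) ≫ (0 : X.X (p+1+1) ⟶ X.X p)))
    · simp only [Preadditive.add_comp, Preadditive.sub_comp, Preadditive.comp_add,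
        Preadditive.comp_sub, Category.assoc, Category.id_comp, Category.comp_id,
        Limits.comp_zero, Limits.zero_comp]
      abel
    · rw [u1, u2]; abel
  have hL4 : ∀ p : ℤ, d' p ≫ (𝟙 (X.X (p+1)) - h p ≫ K p ≫ d' p) = K p ≫ d' p := by
    intro p
    have u1 : (d' p ≫ h p ≫ K p) ≫ d' p = (𝟙 (X.X p) - K p) ≫ d' p := by rw [htK p]
    rw [← sub_eq_zero]
    trans (-((d' p ≫ h p ≫ K p) ≫ d' p - (𝟙 (X.X p) - K p) ≫ d' p))
    · simp only [Preadditive.add_comp, Preadditive.sub_comp, Preadditive.comp_add,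
        Preadditive.comp_sub, Preadditive.neg_comp, Preadditive.comp_neg, neg_sub,
        Category.assoc, Category.id_comp, Category.comp_id]
      abel
    · rw [u1]; abel
  have hN1 : ∀ p : ℤ, (𝟙 (X.X (p+1)) - h p ≫ K p ≫ d' p) ≫ (𝟙 (X.X (p+1)) + h p ≫ d' p) =
      𝟙 (X.X (p+1)) := by
    intro p
    have u1 : h p ≫ (K p ≫ d' p ≫ h p) ≫ d' p = h p ≫ (𝟙 (X.X p) - K p) ≫ d' p := by
      rw [hKt p]
    rw [← sub_eq_zero]
    trans (-(h p ≫ (K p ≫ d' p ≫ h p) ≫ d' p - h p ≫ (𝟙 (X.X p) - K p) ≫ d' p))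
    · simp only [Preadditive.add_comp, Preadditive.sub_comp, Preadditive.comp_add,
        Preadditive.comp_sub, Preadditive.neg_comp, Preadditive.comp_neg, neg_sub,
        Category.assoc, Category.id_comp, Category.comp_id]
      abel
    · rw [u1]; abel
  have hN2 : ∀ p : ℤ, (𝟙 (X.X (p+1)) + h p ≫ d' p) ≫ (𝟙 (X.X (p+1)) - h p ≫ K p ≫ d' p) =
      𝟙 (X.X (p+1)) := by
    intro p
    have u1 : h p ≫ (d' p ≫ h p ≫ K p) ≫ d' p = h p ≫ (𝟙 (X.X p) - K p) ≫ d' p := by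
      rw [htK p]
    rw [← sub_eq_zero]
    trans (-(h p ≫ (d' p ≫ h p ≫ K p) ≫ d' p - h p ≫ (𝟙 (X.X p) - K p) ≫ d' p))
    · simp only [Preadditive.add_comp, Preadditive.sub_comp, Preadditive.comp_add,
        Preadditive.comp_sub, Preadditive.neg_comp, Preadditive.comp_neg, neg_sub,
        Category.assoc, Category.id_comp, Category.comp_id]
      abel
    · rw [u1]; abel
  -- perturbation identity
  have hstar' : ∀ q : ℤ, d' q ≫ X.d (q+1) (q+1+1) + d' q ≫ d' (q+1) =
      -(X.d q (q+1) ≫ d' (q+1)) := by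
    intro q
    have u0 : X.d q (q+1) ≫ X.d (q+1) (q+1+1) = (0 : X.X q ⟶ X.X (q+1+1)) :=
      X.d_comp_d _ _ _
    have u1 := hd' q
    rw [← sub_eq_zero]
    trans (((X.d q (q+1) + d' q) ≫ (X.d (q+1) (q+1+1) + d' (q+1)) - 0) -
      (X.d q (q+1) ≫ X.d (q+1) (q+1+1) - (0 : X.X q ⟶ X.X (q+1+1))))
    · simp only [Preadditive.add_comp, Preadditive.sub_comp, Preadditive.comp_add,
        Preadditive.comp_sub, Preadditive.neg_comp, Preadditive.comp_neg, neg_sub,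
        Category.assoc, Category.id_comp, Category.comp_id, sub_zero, Limits.comp_zero, Limits.zero_comp]
      abel
    · rw [u0, u1]; abel
  -- key commutation identities
  have hE : ∀ q : ℤ, (𝟙 (X.X (q+1)) + h q ≫ d' q) ≫ (X.d (q+1) (q+1+1) + d' (q+1)) =
      X.d (q+1) (q+1+1) ≫ (𝟙 (X.X (q+1+1)) + h (q+1) ≫ d' (q+1)) +
        f.f (q+1) ≫ g.f (q+1) ≫ d' (q+1) := by
    intro q
    have u1 : h q ≫ (d' q ≫ X.d (q+1) (q+1+1) + d' q ≫ d' (q+1)) =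
        h q ≫ (-(X.d q (q+1) ≫ d' (q+1))) := by rw [hstar' q]
    have u2 : (𝟙 (X.X (q+1)) - f.f (q+1) ≫ g.f (q+1)) ≫ d' (q+1) =
        (X.d (q+1) (q+1+1) ≫ h (q+1) + h q ≫ X.d q (q+1)) ≫ d' (q+1) := by rw [hgf1 q]
    rw [← sub_eq_zero]
    trans ((h q ≫ (d' q ≫ X.d (q+1) (q+1+1) + d' q ≫ d' (q+1)) -
        h q ≫ (-(X.d q (q+1) ≫ d' (q+1)))) +
      ((𝟙 (X.X (q+1)) - f.f (q+1) ≫ g.f (q+1)) ≫ d' (q+1) -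
        (X.d (q+1) (q+1+1) ≫ h (q+1) + h q ≫ X.d q (q+1)) ≫ d' (q+1)))
    · simp only [Preadditive.add_comp, Preadditive.sub_comp, Preadditive.comp_add,
        Preadditive.comp_sub, Preadditive.neg_comp, Preadditive.comp_neg, neg_sub,
        Category.assoc, Category.id_comp, Category.comp_id, sub_zero,
        Limits.comp_zero, Limits.zero_comp]
      abel
    · rw [u1, u2]; abel
  have hF : ∀ q : ℤ, (X.d q (q+1) + d' q) ≫ (𝟙 (X.X (q+1)) + d' (q+1) ≫ h (q+1)) =
      (𝟙 (X.X q) + d' q ≫ h q) ≫ X.d q (q+1) + d' q ≫ f.f (q+1) ≫ g.f (q+1) := by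
    intro q
    have u1 : (d' q ≫ X.d (q+1) (q+1+1) + d' q ≫ d' (q+1)) ≫ h (q+1) =
        (-(X.d q (q+1) ≫ d' (q+1))) ≫ h (q+1) := by rw [hstar' q]
    have u2 : d' q ≫ (𝟙 (X.X (q+1)) - f.f (q+1) ≫ g.f (q+1)) =
        d' q ≫ (X.d (q+1) (q+1+1) ≫ h (q+1) + h q ≫ X.d q (q+1)) := by rw [hgf1 q]
    rw [← sub_eq_zero]
    trans (((d' q ≫ X.d (q+1) (q+1+1) + d' q ≫ d' (q+1)) ≫ h (q+1) -
        (-(X.d q (q+1) ≫ d' (q+1))) ≫ h (q+1)) +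
      (d' q ≫ (𝟙 (X.X (q+1)) - f.f (q+1) ≫ g.f (q+1)) -
        d' q ≫ (X.d (q+1) (q+1+1) ≫ h (q+1) + h q ≫ X.d q (q+1))))
    · simp only [Preadditive.add_comp, Preadditive.sub_comp, Preadditive.comp_add,
        Preadditive.comp_sub, Preadditive.neg_comp, Preadditive.comp_neg, neg_sub,
        Category.assoc, Category.id_comp, Category.comp_id, sub_zero,
        Limits.comp_zero, Limits.zero_comp]
      abel
    · rw [u1, u2]; abel
  have hDia : ∀ q : ℤ, K q ≫ X.d q (q+1) + K q ≫ d' q =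
      X.d q (q+1) ≫ K (q+1) + K q ≫ d' q ≫ f.f (q+1) ≫ g.f (q+1) ≫ K (q+1) := by
    intro q
    have u1 : K q ≫ ((X.d q (q+1) + d' q) ≫ (𝟙 (X.X (q+1)) + d' (q+1) ≫ h (q+1))) ≫ K (q+1) =
        K q ≫ ((𝟙 (X.X q) + d' q ≫ h q) ≫ X.d q (q+1) +
          d' q ≫ f.f (q+1) ≫ g.f (q+1)) ≫ K (q+1) := by rw [hF q]
    have u2 : K q ≫ d' q ≫ (d' (q+1) ≫ h (q+1) ≫ K (q+1)) =
        K q ≫ d' q ≫ (𝟙 (X.X (q+1)) - K (q+1)) := by rw [htK (q+1)]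
    have u3 : K q ≫ X.d q (q+1) ≫ (d' (q+1) ≫ h (q+1) ≫ K (q+1)) =
        K q ≫ X.d q (q+1) ≫ (𝟙 (X.X (q+1)) - K (q+1)) := by rw [htK (q+1)]
    have u4 : (K q ≫ d' q ≫ h q) ≫ X.d q (q+1) ≫ K (q+1) =
        (𝟙 (X.X q) - K q) ≫ X.d q (q+1) ≫ K (q+1) := by rw [hKt q]
    rw [← sub_eq_zero]
    trans ((K q ≫ ((X.d q (q+1) + d' q) ≫ (𝟙 (X.X (q+1)) + d' (q+1) ≫ h (q+1))) ≫ K (q+1) -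
        K q ≫ ((𝟙 (X.X q) + d' q ≫ h q) ≫ X.d q (q+1) +
          d' q ≫ f.f (q+1) ≫ g.f (q+1)) ≫ K (q+1)) -
      (K q ≫ d' q ≫ (d' (q+1) ≫ h (q+1) ≫ K (q+1)) -
        K q ≫ d' q ≫ (𝟙 (X.X (q+1)) - K (q+1))) -
      (K q ≫ X.d q (q+1) ≫ (d' (q+1) ≫ h (q+1) ≫ K (q+1)) -
        K q ≫ X.d q (q+1) ≫ (𝟙 (X.X (q+1)) - K (q+1))) +
      ((K q ≫ d' q ≫ h q) ≫ X.d q (q+1) ≫ K (q+1) -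
        (𝟙 (X.X q) - K q) ≫ X.d q (q+1) ≫ K (q+1)))
    · simp only [Preadditive.add_comp, Preadditive.sub_comp, Preadditive.comp_add,
        Preadditive.comp_sub, Preadditive.neg_comp, Preadditive.comp_neg, neg_sub,
        Category.assoc, Category.id_comp, Category.comp_id, sub_zero,
        Limits.comp_zero, Limits.zero_comp]
      abel
    · rw [u1, u2, u3, u4]; abel
  have hDia' : ∀ q : ℤ, (X.d (q+1) (q+1+1) + d' (q+1)) ≫
        (𝟙 (X.X (q+1+1)) - h (q+1) ≫ K (q+1) ≫ d' (q+1)) =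
      (𝟙 (X.X (q+1)) - h q ≫ K q ≫ d' q) ≫ X.d (q+1) (q+1+1) +
        (𝟙 (X.X (q+1)) - h q ≫ K q ≫ d' q) ≫ f.f (q+1) ≫ g.f (q+1) ≫ K (q+1) ≫ d' (q+1) := by
    intro q
    have u1 : (𝟙 (X.X (q+1)) - h q ≫ K q ≫ d' q) ≫
          ((𝟙 (X.X (q+1)) + h q ≫ d' q) ≫ (X.d (q+1) (q+1+1) + d' (q+1))) ≫
          (𝟙 (X.X (q+1+1)) - h (q+1) ≫ K (q+1) ≫ d' (q+1)) =
        (𝟙 (X.X (q+1)) - h q ≫ K q ≫ d' q) ≫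
          (X.d (q+1) (q+1+1) ≫ (𝟙 (X.X (q+1+1)) + h (q+1) ≫ d' (q+1)) +
            f.f (q+1) ≫ g.f (q+1) ≫ d' (q+1)) ≫
          (𝟙 (X.X (q+1+1)) - h (q+1) ≫ K (q+1) ≫ d' (q+1)) := by rw [hE q]
    have u2 : ((𝟙 (X.X (q+1)) - h q ≫ K q ≫ d' q) ≫ (𝟙 (X.X (q+1)) + h q ≫ d' q)) ≫
          ((X.d (q+1) (q+1+1) + d' (q+1)) ≫ (𝟙 (X.X (q+1+1)) - h (q+1) ≫ K (q+1) ≫ d' (q+1))) =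
        𝟙 (X.X (q+1)) ≫ ((X.d (q+1) (q+1+1) + d' (q+1)) ≫
          (𝟙 (X.X (q+1+1)) - h (q+1) ≫ K (q+1) ≫ d' (q+1))) := by rw [hN1 q]
    have u3 : (𝟙 (X.X (q+1)) - h q ≫ K q ≫ d' q) ≫ X.d (q+1) (q+1+1) ≫
          ((𝟙 (X.X (q+1+1)) + h (q+1) ≫ d' (q+1)) ≫
            (𝟙 (X.X (q+1+1)) - h (q+1) ≫ K (q+1) ≫ d' (q+1))) =
        (𝟙 (X.X (q+1)) - h q ≫ K q ≫ d' q) ≫ X.d (q+1) (q+1+1) ≫ 𝟙 (X.X (q+1+1)) := by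
      rw [hN2 (q+1)]
    have u4 : (𝟙 (X.X (q+1)) - h q ≫ K q ≫ d' q) ≫ f.f (q+1) ≫ g.f (q+1) ≫
          (d' (q+1) ≫ (𝟙 (X.X (q+1+1)) - h (q+1) ≫ K (q+1) ≫ d' (q+1))) =
        (𝟙 (X.X (q+1)) - h q ≫ K q ≫ d' q) ≫ f.f (q+1) ≫ g.f (q+1) ≫
          (K (q+1) ≫ d' (q+1)) := by rw [hL4 (q+1)]
    rw [← sub_eq_zero]
    trans (((𝟙 (X.X (q+1)) - h q ≫ K q ≫ d' q) ≫
          ((𝟙 (X.X (q+1)) + h q ≫ d' q) ≫ (X.d (q+1) (q+1+1) + d' (q+1))) ≫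
          (𝟙 (X.X (q+1+1)) - h (q+1) ≫ K (q+1) ≫ d' (q+1)) -
        (𝟙 (X.X (q+1)) - h q ≫ K q ≫ d' q) ≫
          (X.d (q+1) (q+1+1) ≫ (𝟙 (X.X (q+1+1)) + h (q+1) ≫ d' (q+1)) +
            f.f (q+1) ≫ g.f (q+1) ≫ d' (q+1)) ≫
          (𝟙 (X.X (q+1+1)) - h (q+1) ≫ K (q+1) ≫ d' (q+1))) -
      (((𝟙 (X.X (q+1)) - h q ≫ K q ≫ d' q) ≫ (𝟙 (X.X (q+1)) + h q ≫ d' q)) ≫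
          ((X.d (q+1) (q+1+1) + d' (q+1)) ≫ (𝟙 (X.X (q+1+1)) - h (q+1) ≫ K (q+1) ≫ d' (q+1))) -
        𝟙 (X.X (q+1)) ≫ ((X.d (q+1) (q+1+1) + d' (q+1)) ≫
          (𝟙 (X.X (q+1+1)) - h (q+1) ≫ K (q+1) ≫ d' (q+1)))) +
      ((𝟙 (X.X (q+1)) - h q ≫ K q ≫ d' q) ≫ X.d (q+1) (q+1+1) ≫
          ((𝟙 (X.X (q+1+1)) + h (q+1) ≫ d' (q+1)) ≫
            (𝟙 (X.X (q+1+1)) - h (q+1) ≫ K (q+1) ≫ d' (q+1))) -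
        (𝟙 (X.X (q+1)) - h q ≫ K q ≫ d' q) ≫ X.d (q+1) (q+1+1) ≫ 𝟙 (X.X (q+1+1))) +
      ((𝟙 (X.X (q+1)) - h q ≫ K q ≫ d' q) ≫ f.f (q+1) ≫ g.f (q+1) ≫
          (d' (q+1) ≫ (𝟙 (X.X (q+1+1)) - h (q+1) ≫ K (q+1) ≫ d' (q+1))) -
        (𝟙 (X.X (q+1)) - h q ≫ K q ≫ d' q) ≫ f.f (q+1) ≫ g.f (q+1) ≫
          (K (q+1) ≫ d' (q+1))))
    · simp only [Preadditive.add_comp, Preadditive.sub_comp, Preadditive.comp_add,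
        Preadditive.comp_sub, Preadditive.neg_comp, Preadditive.comp_neg, neg_sub,
        Category.assoc, Category.id_comp, Category.comp_id, sub_zero,
        Limits.comp_zero, Limits.zero_comp]
      abel
    · rw [u1, u2, u3, u4]; abel
  have hSS : ∀ q : ℤ, K q ≫ d' q ≫ X.d (q+1) (q+1+1) + X.d q (q+1) ≫ K (q+1) ≫ d' (q+1) +
      K q ≫ d' q ≫ f.f (q+1) ≫ g.f (q+1) ≫ K (q+1) ≫ d' (q+1) = 0 := by
    intro q
    have u1 : K q ≫ (d' q ≫ X.d (q+1) (q+1+1) + d' q ≫ d' (q+1)) =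
        K q ≫ (-(X.d q (q+1) ≫ d' (q+1))) := by rw [hstar' q]
    have u2 : (K q ≫ X.d q (q+1) + K q ≫ d' q) ≫ d' (q+1) =
        (X.d q (q+1) ≫ K (q+1) + K q ≫ d' q ≫ f.f (q+1) ≫ g.f (q+1) ≫ K (q+1)) ≫
          d' (q+1) := by rw [hDia q]
    trans ((K q ≫ (d' q ≫ X.d (q+1) (q+1+1) + d' q ≫ d' (q+1)) -
        K q ≫ (-(X.d q (q+1) ≫ d' (q+1)))) -
      ((K q ≫ X.d q (q+1) + K q ≫ d' q) ≫ d' (q+1) -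
        (X.d q (q+1) ≫ K (q+1) + K q ≫ d' q ≫ f.f (q+1) ≫ g.f (q+1) ≫ K (q+1)) ≫ d' (q+1)))
    · simp only [Preadditive.add_comp, Preadditive.sub_comp, Preadditive.comp_add,
        Preadditive.comp_sub, Preadditive.neg_comp, Preadditive.comp_neg, neg_sub,
        Category.assoc, Category.id_comp, Category.comp_id, sub_zero,
        Limits.comp_zero, Limits.zero_comp]
      abel
    · rw [u1, u2]; abel
  refine ⟨fun p => g.f p ≫ K p ≫ d' p ≫ f.f (p+1),
    fun p => f.f p - eqToHom (congrArg X.X (by ring : p = p - 1 + 1)) ≫ h (p-1) ≫ K (p-1) ≫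
      d' (p-1) ≫ eqToHom (congrArg X.X (by ring : p - 1 + 1 = p)) ≫ f.f p,
    fun p => g.f p ≫ K p, fun p => h p ≫ K p, ?_, ?_, ?_, ?_, ?_, ?_, ?_, ?_⟩
  -- G1 : perturbed dY is a differential
  · intro p
    dsimp only
    have u0 : Y.d p (p+1) ≫ Y.d (p+1) (p+1+1) = (0 : Y.X p ⟶ Y.X (p+1+1)) := Y.d_comp_d _ _ _
    have u1 : (g.f p ≫ X.d p (p+1)) ≫ K (p+1) ≫ d' (p+1) ≫ f.f (p+1+1) =
        (Y.d p (p+1) ≫ g.f (p+1)) ≫ K (p+1) ≫ d' (p+1) ≫ f.f (p+1+1) := by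
      rw [HomologicalComplex.Hom.comm]
    have u2 : g.f p ≫ K p ≫ d' p ≫ (f.f (p+1) ≫ Y.d (p+1) (p+1+1)) =
        g.f p ≫ K p ≫ d' p ≫ (X.d (p+1) (p+1+1) ≫ f.f (p+1+1)) := by
      rw [HomologicalComplex.Hom.comm]
    have u3 : g.f p ≫ (K p ≫ d' p ≫ X.d (p+1) (p+1+1) + X.d p (p+1) ≫ K (p+1) ≫ d' (p+1) +
          K p ≫ d' p ≫ f.f (p+1) ≫ g.f (p+1) ≫ K (p+1) ≫ d' (p+1)) ≫ f.f (p+1+1) =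
        g.f p ≫ (0 : X.X p ⟶ X.X (p+1+1)) ≫ f.f (p+1+1) := by rw [hSS p]
    trans ((Y.d p (p+1) ≫ Y.d (p+1) (p+1+1) - (0 : Y.X p ⟶ Y.X (p+1+1))) -
      ((g.f p ≫ X.d p (p+1)) ≫ K (p+1) ≫ d' (p+1) ≫ f.f (p+1+1) -
        (Y.d p (p+1) ≫ g.f (p+1)) ≫ K (p+1) ≫ d' (p+1) ≫ f.f (p+1+1)) +
      (g.f p ≫ K p ≫ d' p ≫ (f.f (p+1) ≫ Y.d (p+1) (p+1+1)) -
        g.f p ≫ K p ≫ d' p ≫ (X.d (p+1) (p+1+1) ≫ f.f (p+1+1))) +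
      (g.f p ≫ (K p ≫ d' p ≫ X.d (p+1) (p+1+1) + X.d p (p+1) ≫ K (p+1) ≫ d' (p+1) +
          K p ≫ d' p ≫ f.f (p+1) ≫ g.f (p+1) ≫ K (p+1) ≫ d' (p+1)) ≫ f.f (p+1+1) -
        g.f p ≫ (0 : X.X p ⟶ X.X (p+1+1)) ≫ f.f (p+1+1)))
    · simp only [Preadditive.add_comp, Preadditive.sub_comp, Preadditive.comp_add,
        Preadditive.comp_sub, Preadditive.neg_comp, Preadditive.comp_neg, neg_sub,
        Category.assoc, Category.id_comp, Category.comp_id, sub_zero,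
        Limits.comp_zero, Limits.zero_comp]
      abel
    · rw [u0, u1, u2, u3]; abel
  -- G2 : fh is a chain map
  · intro p
    obtain ⟨q, rfl⟩ : ∃ q : ℤ, p = q + 1 := ⟨p - 1, by ring⟩
    dsimp only
    rw [castF (q+1+1-1) (q+1) (by ring), castF (q+1-1) q (by ring)]
    have u1 : ((X.d (q+1) (q+1+1) + d' (q+1)) ≫
          (𝟙 (X.X (q+1+1)) - h (q+1) ≫ K (q+1) ≫ d' (q+1))) ≫ f.f (q+1+1) =
        ((𝟙 (X.X (q+1)) - h q ≫ K q ≫ d' q) ≫ X.d (q+1) (q+1+1) +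
          (𝟙 (X.X (q+1)) - h q ≫ K q ≫ d' q) ≫ f.f (q+1) ≫ g.f (q+1) ≫ K (q+1) ≫ d' (q+1)) ≫
          f.f (q+1+1) := by rw [hDia' q]
    have u2 : (𝟙 (X.X (q+1)) - h q ≫ K q ≫ d' q) ≫ (f.f (q+1) ≫ Y.d (q+1) (q+1+1)) =
        (𝟙 (X.X (q+1)) - h q ≫ K q ≫ d' q) ≫ (X.d (q+1) (q+1+1) ≫ f.f (q+1+1)) := by
      rw [HomologicalComplex.Hom.comm]
    rw [← sub_eq_zero]
    trans ((((X.d (q+1) (q+1+1) + d' (q+1)) ≫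
          (𝟙 (X.X (q+1+1)) - h (q+1) ≫ K (q+1) ≫ d' (q+1))) ≫ f.f (q+1+1) -
        ((𝟙 (X.X (q+1)) - h q ≫ K q ≫ d' q) ≫ X.d (q+1) (q+1+1) +
          (𝟙 (X.X (q+1)) - h q ≫ K q ≫ d' q) ≫ f.f (q+1) ≫ g.f (q+1) ≫ K (q+1) ≫ d' (q+1)) ≫
          f.f (q+1+1)) -
      ((𝟙 (X.X (q+1)) - h q ≫ K q ≫ d' q) ≫ (f.f (q+1) ≫ Y.d (q+1) (q+1+1)) -
        (𝟙 (X.X (q+1)) - h q ≫ K q ≫ d' q) ≫ (X.d (q+1) (q+1+1) ≫ f.f (q+1+1))))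
    · simp only [Preadditive.add_comp, Preadditive.sub_comp, Preadditive.comp_add,
        Preadditive.comp_sub, Preadditive.neg_comp, Preadditive.comp_neg, neg_sub,
        Category.assoc, Category.id_comp, Category.comp_id, sub_zero,
        Limits.comp_zero, Limits.zero_comp]
      abel
    · rw [u1, u2]; abel
  -- G3 : gh is a chain map
  · intro p
    dsimp only
    have u1 : (g.f p ≫ X.d p (p+1)) ≫ K (p+1) = (Y.d p (p+1) ≫ g.f (p+1)) ≫ K (p+1) := by
      rw [HomologicalComplex.Hom.comm]
    have u2 : g.f p ≫ (K p ≫ X.d p (p+1) + K p ≫ d' p) =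
        g.f p ≫ (X.d p (p+1) ≫ K (p+1) +
          K p ≫ d' p ≫ f.f (p+1) ≫ g.f (p+1) ≫ K (p+1)) := by rw [hDia p]
    rw [← sub_eq_zero]
    trans (-((g.f p ≫ X.d p (p+1)) ≫ K (p+1) - (Y.d p (p+1) ≫ g.f (p+1)) ≫ K (p+1)) -
      (g.f p ≫ (K p ≫ X.d p (p+1) + K p ≫ d' p) -
        g.f p ≫ (X.d p (p+1) ≫ K (p+1) + K p ≫ d' p ≫ f.f (p+1) ≫ g.f (p+1) ≫ K (p+1))))
    · simp only [Preadditive.add_comp, Preadditive.sub_comp, Preadditive.comp_add,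
        Preadditive.comp_sub, Preadditive.neg_comp, Preadditive.comp_neg, neg_sub,
        Category.assoc, Category.id_comp, Category.comp_id, sub_zero,
        Limits.comp_zero, Limits.zero_comp]
      abel
    · rw [u1, u2]; abel
  -- G4 : gh ≫ fh = 𝟙
  · intro p
    obtain ⟨q, rfl⟩ : ∃ q : ℤ, p = q + 1 := ⟨p - 1, by ring⟩
    dsimp only
    rw [castF (q+1-1) q (by ring)]
    have u1 : g.f (q+1) ≫ (K (q+1) ≫ d' (q+1) ≫ h (q+1)) ≫ f.f (q+1) =
        g.f (q+1) ≫ (𝟙 (X.X (q+1)) - K (q+1)) ≫ f.f (q+1) := by rw [hKt (q+1)]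
    have u2 : g.f (q+1) ≫ K (q+1) ≫ d' (q+1) ≫ (h (q+1) ≫ f.f (q+1)) =
        g.f (q+1) ≫ K (q+1) ≫ d' (q+1) ≫ (0 : X.X (q+1+1) ⟶ Y.X (q+1)) := by rw [hfh (q+1)]
    have u3 : g.f (q+1) ≫ (K (q+1) ≫ h q) ≫ K q ≫ d' q ≫ f.f (q+1) =
        g.f (q+1) ≫ h q ≫ K q ≫ d' q ≫ f.f (q+1) := by rw [hL6 q]
    have u4 : (g.f (q+1) ≫ h q) ≫ K q ≫ d' q ≫ f.f (q+1) =
        (0 : Y.X (q+1) ⟶ X.X q) ≫ K q ≫ d' q ≫ f.f (q+1) := by rw [hhg q]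
    have u5 : g.f (q+1) ≫ f.f (q+1) = 𝟙 (Y.X (q+1)) := hfg (q+1)
    rw [← sub_eq_zero]
    trans ((g.f (q+1) ≫ (K (q+1) ≫ d' (q+1) ≫ h (q+1)) ≫ f.f (q+1) -
        g.f (q+1) ≫ (𝟙 (X.X (q+1)) - K (q+1)) ≫ f.f (q+1)) -
      (g.f (q+1) ≫ K (q+1) ≫ d' (q+1) ≫ (h (q+1) ≫ f.f (q+1)) -
        g.f (q+1) ≫ K (q+1) ≫ d' (q+1) ≫ (0 : X.X (q+1+1) ⟶ Y.X (q+1))) -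
      (g.f (q+1) ≫ (K (q+1) ≫ h q) ≫ K q ≫ d' q ≫ f.f (q+1) -
        g.f (q+1) ≫ h q ≫ K q ≫ d' q ≫ f.f (q+1)) -
      ((g.f (q+1) ≫ h q) ≫ K q ≫ d' q ≫ f.f (q+1) -
        (0 : Y.X (q+1) ⟶ X.X q) ≫ K q ≫ d' q ≫ f.f (q+1)) +
      (g.f (q+1) ≫ f.f (q+1) - 𝟙 (Y.X (q+1))))
    · simp only [Preadditive.add_comp, Preadditive.sub_comp, Preadditive.comp_add,
        Preadditive.comp_sub, Preadditive.neg_comp, Preadditive.comp_neg, neg_sub,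
        Category.assoc, Category.id_comp, Category.comp_id, sub_zero,
        Limits.comp_zero, Limits.zero_comp]
      abel
    · rw [u1, u2, u3, u4, u5]; abel
  -- G5 : homotopy identity
  · intro p
    obtain ⟨q, rfl⟩ : ∃ q : ℤ, p = q + 1 := ⟨p - 1, by ring⟩
    dsimp only
    rw [castF (q+1-1) q (by ring), castHH (q+1-1) q (by ring)]
    have u1 : d' (q+1) ≫ h (q+1) ≫ K (q+1) = 𝟙 (X.X (q+1)) - K (q+1) := htK (q+1)
    have u2 : h q ≫ (K q ≫ X.d q (q+1) + K q ≫ d' q) =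
        h q ≫ (X.d q (q+1) ≫ K (q+1) +
          K q ≫ d' q ≫ f.f (q+1) ≫ g.f (q+1) ≫ K (q+1)) := by rw [hDia q]
    have u3 : (𝟙 (X.X (q+1)) - f.f (q+1) ≫ g.f (q+1)) ≫ K (q+1) =
        (X.d (q+1) (q+1+1) ≫ h (q+1) + h q ≫ X.d q (q+1)) ≫ K (q+1) := by rw [hgf1 q]
    rw [← sub_eq_zero]
    trans (-(d' (q+1) ≫ h (q+1) ≫ K (q+1) - (𝟙 (X.X (q+1)) - K (q+1))) -
      (h q ≫ (K q ≫ X.d q (q+1) + K q ≫ d' q) -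
        h q ≫ (X.d q (q+1) ≫ K (q+1) + K q ≫ d' q ≫ f.f (q+1) ≫ g.f (q+1) ≫ K (q+1))) +
      ((𝟙 (X.X (q+1)) - f.f (q+1) ≫ g.f (q+1)) ≫ K (q+1) -
        (X.d (q+1) (q+1+1) ≫ h (q+1) + h q ≫ X.d q (q+1)) ≫ K (q+1)))
    · simp only [Preadditive.add_comp, Preadditive.sub_comp, Preadditive.comp_add,
        Preadditive.comp_sub, Preadditive.neg_comp, Preadditive.comp_neg, neg_sub,
        Category.assoc, Category.id_comp, Category.comp_id, sub_zero,
        Limits.comp_zero, Limits.zero_comp]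
      abel
    · rw [u1, u2, u3]; abel
  -- G6 : hh ≫ fh = 0
  · intro p
    obtain ⟨q, rfl⟩ : ∃ q : ℤ, p = q + 1 := ⟨p - 1, by ring⟩
    dsimp only
    rw [castF (q+1-1) q (by ring)]
    have u1 : h (q+1) ≫ (K (q+1) ≫ d' (q+1) ≫ h (q+1)) ≫ f.f (q+1) =
        h (q+1) ≫ (𝟙 (X.X (q+1)) - K (q+1)) ≫ f.f (q+1) := by rw [hKt (q+1)]
    have u2 : h (q+1) ≫ K (q+1) ≫ d' (q+1) ≫ (h (q+1) ≫ f.f (q+1)) =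
        h (q+1) ≫ K (q+1) ≫ d' (q+1) ≫ (0 : X.X (q+1+1) ⟶ Y.X (q+1)) := by rw [hfh (q+1)]
    have u3 : h (q+1) ≫ f.f (q+1) = 0 := hfh (q+1)
    have u4 : h (q+1) ≫ (K (q+1) ≫ h q) ≫ K q ≫ d' q ≫ f.f (q+1) =
        h (q+1) ≫ h q ≫ K q ≫ d' q ≫ f.f (q+1) := by rw [hL6 q]
    have u5 : (h (q+1) ≫ h q) ≫ K q ≫ d' q ≫ f.f (q+1) =
        (0 : X.X (q+1+1) ⟶ X.X q) ≫ K q ≫ d' q ≫ f.f (q+1) := by rw [hhh q]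
    trans ((h (q+1) ≫ (K (q+1) ≫ d' (q+1) ≫ h (q+1)) ≫ f.f (q+1) -
        h (q+1) ≫ (𝟙 (X.X (q+1)) - K (q+1)) ≫ f.f (q+1)) -
      (h (q+1) ≫ K (q+1) ≫ d' (q+1) ≫ (h (q+1) ≫ f.f (q+1)) -
        h (q+1) ≫ K (q+1) ≫ d' (q+1) ≫ (0 : X.X (q+1+1) ⟶ Y.X (q+1))) +
      (h (q+1) ≫ f.f (q+1) - (0 : X.X (q+1+1) ⟶ Y.X (q+1))) -
      (h (q+1) ≫ (K (q+1) ≫ h q) ≫ K q ≫ d' q ≫ f.f (q+1) -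
        h (q+1) ≫ h q ≫ K q ≫ d' q ≫ f.f (q+1)) -
      ((h (q+1) ≫ h q) ≫ K q ≫ d' q ≫ f.f (q+1) -
        (0 : X.X (q+1+1) ⟶ X.X q) ≫ K q ≫ d' q ≫ f.f (q+1)))
    · simp only [Preadditive.add_comp, Preadditive.sub_comp, Preadditive.comp_add,
        Preadditive.comp_sub, Preadditive.neg_comp, Preadditive.comp_neg, neg_sub,
        Category.assoc, Category.id_comp, Category.comp_id, sub_zero,
        Limits.comp_zero, Limits.zero_comp]
      abel
    · rw [u1, u2, u3, u4, u5]; abel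
  -- G7 : gh ≫ hh = 0
  · intro p
    dsimp only
    have u1 : g.f (p+1) ≫ (K (p+1) ≫ h p) ≫ K p = g.f (p+1) ≫ h p ≫ K p := by rw [hL6 p]
    have u2 : (g.f (p+1) ≫ h p) ≫ K p = (0 : Y.X (p+1) ⟶ X.X p) ≫ K p := by rw [hhg p]
    trans ((g.f (p+1) ≫ (K (p+1) ≫ h p) ≫ K p - g.f (p+1) ≫ h p ≫ K p) +
      ((g.f (p+1) ≫ h p) ≫ K p - (0 : Y.X (p+1) ⟶ X.X p) ≫ K p))
    · simp only [Preadditive.add_comp, Preadditive.sub_comp, Preadditive.comp_add,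
        Preadditive.comp_sub, Preadditive.neg_comp, Preadditive.comp_neg, neg_sub,
        Category.assoc, Category.id_comp, Category.comp_id, sub_zero,
        Limits.comp_zero, Limits.zero_comp]
      abel
    · rw [u1, u2]; abel
  -- G8 : hh ≫ hh = 0
  · intro p
    dsimp only
    have u1 : h (p+1) ≫ (K (p+1) ≫ h p) ≫ K p = h (p+1) ≫ h p ≫ K p := by rw [hL6 p]
    have u2 : (h (p+1) ≫ h p) ≫ K p = (0 : X.X (p+1+1) ⟶ X.X p) ≫ K p := by rw [hhh p]
    trans ((h (p+1) ≫ (K (p+1) ≫ h p) ≫ K p - h (p+1) ≫ h p ≫ K p) +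
      ((h (p+1) ≫ h p) ≫ K p - (0 : X.X (p+1+1) ⟶ X.X p) ≫ K p))
    · simp only [Preadditive.add_comp, Preadditive.sub_comp, Preadditive.comp_add,
        Preadditive.comp_sub, Preadditive.neg_comp, Preadditive.comp_neg, neg_sub,
        Category.assoc, Category.id_comp, Category.comp_id, sub_zero,
        Limits.comp_zero, Limits.zero_comp]
      abel
    · rw [u1, u2]; abel
end

section
/- Cancellation of a contractible direct summand: Let X• be a complex in an abelian category such that each X^p decomposes as V^p ⊕ W^p ⊕ Y^p, and such that the component d^p_{wv}: V^p → W^{p+1} of the differential is an isomorphism for all p. Define d^p_Y = d^p_{yy} − d^p_{yv}(d^p_{wv})^{-1} d^p_{wy}: Y^p → Y^{p+1}. Then Y• = (Y^p, d^p_Y) is a complex and there is a contraction (f, g, h) of X• onto Y•, with f^p = (0, −d^{p-1}_{yv}(d^{p-1}_{wv})^{-1}, id), g^p = (−(d^p_{wv})^{-1}d^p_{wy}, 0, id)^T, and h^p the map X^p → X^{p-1} whose only nonzero component is (d^{p-1}_{wv})^{-1}: W^p → V^{p-1}. -/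
open CategoryTheory CategoryTheory.Limits

section Aux

variable {C : Type*} [Category C] [Preadditive C] [HasBinaryBiproducts C]

/-- A 3×3 matrix of morphisms as a morphism between triple biproducts. -/
noncomputable def triMat {A B Cc A' B' C' : C}
    (fvv : A ⟶ A') (fwv : A ⟶ B') (fyv : A ⟶ C')
    (fvw : B ⟶ A') (fww : B ⟶ B') (fyw : B ⟶ C')
    (fvy : Cc ⟶ A') (fwy : Cc ⟶ B') (fyy : Cc ⟶ C') :
    (A ⊞ B) ⊞ Cc ⟶ (A' ⊞ B') ⊞ C' :=
  biprod.desc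
    (biprod.desc (biprod.lift (biprod.lift fvv fwv) fyv)
      (biprod.lift (biprod.lift fvw fww) fyw))
    (biprod.lift (biprod.lift fvy fwy) fyy)

end Aux

set_option maxHeartbeats 2000000 in
/-- Cancellation of a contractible direct summand.  Let `X•` be a complex in
an abelian category such that each `X^p` decomposes as `V^p ⊕ W^p ⊕ Y^p` (given by
isomorphisms `e p : X^p ≅ (V^p ⊞ W^p) ⊞ Y^p`), and such that the component
`d^p_{wv} : V^p → W^{p+1}` of the differential is an isomorphism for all `p`.  Define
`d^p_Y = d^p_{yy} − d^p_{yv}(d^p_{wv})^{-1} d^p_{wy} : Y^p → Y^{p+1}`.  Then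
`Y• = (Y^p, d^p_Y)` is a complex and there is a contraction `(f, g, h)` of `X•` onto
`Y•` given by the formulas `f^p = (0, −d^{p-1}_{yv}(d^{p-1}_{wv})^{-1}, id)`,
`g^p = (−(d^p_{wv})^{-1}d^p_{wy}, 0, id)ᵀ`, and `h^p : X^p → X^{p-1}` with unique
nonzero component `(d^{p-1}_{wv})^{-1} : W^p → V^{p-1}`. -/
theorem statement11 {C : Type*} [Category C] [Abelian C]
    (X : CochainComplex C ℤ) (V W Y : ℤ → C)
    (e : ∀ p : ℤ, X.X p ≅ (V p ⊞ W p) ⊞ Y p)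
    -- the components of the differential `d^p_X` with respect to the decompositions
    (dwv : ∀ p : ℤ, V p ⟶ W (p + 1)) (dwy : ∀ p : ℤ, Y p ⟶ W (p + 1))
    (dyv : ∀ p : ℤ, V p ⟶ Y (p + 1)) (dyy : ∀ p : ℤ, Y p ⟶ Y (p + 1))
    (hdwv : ∀ p, dwv p =
      biprod.inl ≫ biprod.inl ≫ (e p).inv ≫ X.d p (p + 1) ≫ (e (p + 1)).hom ≫
        biprod.fst ≫ biprod.snd)
    (hdwy : ∀ p, dwy p =
      biprod.inr ≫ (e p).inv ≫ X.d p (p + 1) ≫ (e (p + 1)).hom ≫ biprod.fst ≫ biprod.snd)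
    (hdyv : ∀ p, dyv p =
      biprod.inl ≫ biprod.inl ≫ (e p).inv ≫ X.d p (p + 1) ≫ (e (p + 1)).hom ≫ biprod.snd)
    (hdyy : ∀ p, dyy p =
      biprod.inr ≫ (e p).inv ≫ X.d p (p + 1) ≫ (e (p + 1)).hom ≫ biprod.snd)
    -- `d^p_{wv}` is an isomorphism
    (hiso : ∀ p : ℤ, IsIso (dwv p))
    -- `d_Y`, `f`, `g`, `h` are given by the formulas of the statement
    (dY : ∀ p : ℤ, Y p ⟶ Y (p + 1))
    (hdY : ∀ p, dY p = dyy p - dwy p ≫ inv (dwv p) ≫ dyv p)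
    (f : ∀ p : ℤ, X.X p ⟶ Y p)
    (hf : ∀ p, f p = (e p).hom ≫
      (biprod.snd - biprod.fst ≫ biprod.snd ≫ eqToHom (by ring_nf) ≫
        inv (dwv (p - 1)) ≫ dyv (p - 1) ≫ eqToHom (by ring_nf)))
    (g : ∀ p : ℤ, Y p ⟶ X.X p)
    (hg : ∀ p, g p = (biprod.inr - dwy p ≫ inv (dwv p) ≫ biprod.inl ≫ biprod.inl) ≫ (e p).inv)
    (h : ∀ p : ℤ, X.X (p + 1) ⟶ X.X p)
    (hh : ∀ p, h p = (e (p + 1)).hom ≫ biprod.fst ≫ biprod.snd ≫ inv (dwv p) ≫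
      biprod.inl ≫ biprod.inl ≫ (e p).inv) :
    -- `Y•` is a complex:
    (∀ p : ℤ, dY p ≫ dY (p + 1) = 0) ∧
    -- `f` and `g` are chain maps:
    (∀ p : ℤ, X.d p (p + 1) ≫ f (p + 1) = f p ≫ dY p) ∧
    (∀ p : ℤ, dY p ≫ g (p + 1) = g p ≫ X.d p (p + 1)) ∧
    -- `(f, g, h)` is a contraction of `X•` onto `Y•`:
    (∀ p : ℤ, g p ≫ f p = 𝟙 (Y p)) ∧
    (∀ p : ℤ, 𝟙 (X.X p) - f p ≫ g p =
      X.d p (p + 1) ≫ h p + eqToHom (by ring_nf) ≫ h (p - 1) ≫ X.d (p - 1) p) ∧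
    (∀ p : ℤ, h p ≫ f p = 0) ∧
    (∀ p : ℤ, g (p + 1) ≫ h p = 0) ∧
    (∀ p : ℤ, h (p + 1) ≫ h p = 0) := by
  haveI : ∀ p, IsIso (dwv p) := hiso
  -- express the differential as a matrix
  have hex : ∀ p : ℤ, ∃ (fvv : V p ⟶ V (p + 1)) (fvw : W p ⟶ V (p + 1))
      (fvy : Y p ⟶ V (p + 1)) (fww : W p ⟶ W (p + 1)) (fyw : W p ⟶ Y (p + 1)),
      X.d p (p + 1) = (e p).hom ≫
        triMat fvv (dwv p) (dyv p) fvw fww fyw fvy (dwy p) (dyy p) ≫ (e (p + 1)).inv := by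
    intro p
    refine ⟨biprod.inl ≫ biprod.inl ≫ (e p).inv ≫ X.d p (p + 1) ≫ (e (p + 1)).hom ≫
        biprod.fst ≫ biprod.fst,
      biprod.inr ≫ biprod.inl ≫ (e p).inv ≫ X.d p (p + 1) ≫ (e (p + 1)).hom ≫
        biprod.fst ≫ biprod.fst,
      biprod.inr ≫ (e p).inv ≫ X.d p (p + 1) ≫ (e (p + 1)).hom ≫ biprod.fst ≫ biprod.fst,
      biprod.inr ≫ biprod.inl ≫ (e p).inv ≫ X.d p (p + 1) ≫ (e (p + 1)).hom ≫
        biprod.fst ≫ biprod.snd,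
      biprod.inr ≫ biprod.inl ≫ (e p).inv ≫ X.d p (p + 1) ≫ (e (p + 1)).hom ≫ biprod.snd, ?_⟩
    rw [show X.d p (p + 1) =
        (e p).hom ≫ ((e p).inv ≫ X.d p (p + 1) ≫ (e (p + 1)).hom) ≫ (e (p + 1)).inv by simp,
      cancel_epi (e p).hom, cancel_mono (e (p + 1)).inv]
    ext <;> simp [triMat, hdwv p, hdwy p, hdyv p, hdyy p]
  choose fvv fvw fvy fww fyw hdmat using hex
  have K : ∀ p : ℤ, triMat (fvv p) (dwv p) (dyv p) (fvw p) (fww p) (fyw p)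
      (fvy p) (dwy p) (dyy p) ≫ triMat (fvv (p + 1)) (dwv (p + 1)) (dyv (p + 1))
      (fvw (p + 1)) (fww (p + 1)) (fyw (p + 1)) (fvy (p + 1)) (dwy (p + 1)) (dyy (p + 1)) =
      0 := by
    intro p
    have h0 := X.d_comp_d p (p + 1) (p + 1 + 1)
    rw [hdmat p, hdmat (p + 1)] at h0
    rw [← cancel_epi (e p).hom, ← cancel_mono (e (p + 1 + 1)).inv]
    simpa using h0
  have hvw := fun p : ℤ => congrArg (fun m => (biprod.inl ≫ biprod.inl : V p ⟶ _) ≫ m ≫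
      (biprod.fst ≫ biprod.snd : _ ⟶ W (p + 1 + 1))) (K p)
  have hvy := fun p : ℤ => congrArg (fun m => (biprod.inl ≫ biprod.inl : V p ⟶ _) ≫ m ≫
      (biprod.snd : _ ⟶ Y (p + 1 + 1))) (K p)
  have hyw := fun p : ℤ => congrArg (fun m => (biprod.inr : Y p ⟶ _) ≫ m ≫
      (biprod.fst ≫ biprod.snd : _ ⟶ W (p + 1 + 1))) (K p)
  have hyy := fun p : ℤ => congrArg (fun m => (biprod.inr : Y p ⟶ _) ≫ m ≫
      (biprod.snd : _ ⟶ Y (p + 1 + 1))) (K p)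
  simp only [triMat] at hvw hvy hyw hyy
  simp at hvw hvy hyw hyy
  -- solved (reassoc'd) forms of the component identities
  have R1 : ∀ (p : ℤ) {Z : C} (u : W (p + 1 + 1) ⟶ Z),
      dyv p ≫ dwy (p + 1) ≫ u =
        -(fvv p ≫ dwv (p + 1) ≫ u) - dwv p ≫ fww (p + 1) ≫ u := by
    intro p Z u
    have h2 : (fvv p ≫ dwv (p + 1) + dwv p ≫ fww (p + 1) + dyv p ≫ dwy (p + 1)) ≫ u = 0 := by
      rw [hvw p, zero_comp]
    simp only [Preadditive.add_comp, Category.assoc] at h2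
    rw [← sub_eq_zero, ← h2]; abel
  have R2 : ∀ (p : ℤ) {Z : C} (u : Y (p + 1 + 1) ⟶ Z),
      dyv p ≫ dyy (p + 1) ≫ u =
        -(fvv p ≫ dyv (p + 1) ≫ u) - dwv p ≫ fyw (p + 1) ≫ u := by
    intro p Z u
    have h2 : (fvv p ≫ dyv (p + 1) + dwv p ≫ fyw (p + 1) + dyv p ≫ dyy (p + 1)) ≫ u = 0 := by
      rw [hvy p, zero_comp]
    simp only [Preadditive.add_comp, Category.assoc] at h2
    rw [← sub_eq_zero, ← h2]; abel
  have R3 : ∀ (p : ℤ) {Z : C} (u : W (p + 1 + 1) ⟶ Z),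
      dyy p ≫ dwy (p + 1) ≫ u =
        -(fvy p ≫ dwv (p + 1) ≫ u) - dwy p ≫ fww (p + 1) ≫ u := by
    intro p Z u
    have h2 : (fvy p ≫ dwv (p + 1) + dwy p ≫ fww (p + 1) + dyy p ≫ dwy (p + 1)) ≫ u = 0 := by
      rw [hyw p, zero_comp]
    simp only [Preadditive.add_comp, Category.assoc] at h2
    rw [← sub_eq_zero, ← h2]; abel
  have R4 : ∀ (p : ℤ) {Z : C} (u : Y (p + 1 + 1) ⟶ Z),
      dyy p ≫ dyy (p + 1) ≫ u =
        -(fvy p ≫ dyv (p + 1) ≫ u) - dwy p ≫ fyw (p + 1) ≫ u := by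
    intro p Z u
    have h2 : (fvy p ≫ dyv (p + 1) + dwy p ≫ fyw (p + 1) + dyy p ≫ dyy (p + 1)) ≫ u = 0 := by
      rw [hyy p, zero_comp]
    simp only [Preadditive.add_comp, Category.assoc] at h2
    rw [← sub_eq_zero, ← h2]; abel
  -- plain (non-reassoc'd) forms
  have P1 : ∀ p : ℤ, dyv p ≫ dwy (p + 1) =
      -(fvv p ≫ dwv (p + 1)) - dwv p ≫ fww (p + 1) := by
    intro p; simpa using R1 p (𝟙 _)
  have P2 : ∀ p : ℤ, dyv p ≫ dyy (p + 1) =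
      -(fvv p ≫ dyv (p + 1)) - dwv p ≫ fyw (p + 1) := by
    intro p; simpa using R2 p (𝟙 _)
  have P3 : ∀ p : ℤ, dyy p ≫ dwy (p + 1) =
      -(fvy p ≫ dwv (p + 1)) - dwy p ≫ fww (p + 1) := by
    intro p; simpa using R3 p (𝟙 _)
  have P4 : ∀ p : ℤ, dyy p ≫ dyy (p + 1) =
      -(fvy p ≫ dyv (p + 1)) - dwy p ≫ fyw (p + 1) := by
    intro p; simpa using R4 p (𝟙 _)
  -- a cast-free formula for `f (q + 1)`
  have hF : ∀ q : ℤ, f (q + 1) = (e (q + 1)).hom ≫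
      (biprod.snd - biprod.fst ≫ biprod.snd ≫ inv (dwv q) ≫ dyv q) := by
    intro q
    have gen : ∀ (r : ℤ), r = q → ∀ (h1 : W (q + 1) = W (r + 1)) (h2 : Y (r + 1) = Y (q + 1)),
        (biprod.fst : (V (q+1) ⊞ W (q+1)) ⊞ Y (q+1) ⟶ _) ≫ biprod.snd ≫ eqToHom h1 ≫
          inv (dwv r) ≫ dyv r ≫ eqToHom h2 =
        biprod.fst ≫ biprod.snd ≫ inv (dwv q) ≫ dyv q := by
      rintro r rfl h1 h2; simp
    rw [hf (q + 1), gen (q + 1 - 1) (by ring)]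
  refine ⟨?_, ?_, ?_, ?_, ?_, ?_, ?_, ?_⟩
  · -- dY is a differential
    intro p
    rw [hdY p, hdY (p + 1)]
    simp only [Preadditive.sub_comp, Preadditive.comp_sub, Category.assoc]
    rw [P4 p, R3 p, P2 p, R1 p]
    simp [Preadditive.comp_sub, Preadditive.sub_comp]
  · -- f is a chain map
    intro p
    obtain ⟨q, rfl⟩ : ∃ q, p = q + 1 := ⟨p - 1, by ring⟩
    rw [hdmat (q + 1), hF (q + 1), hF q, hdY (q + 1)]
    simp only [Category.assoc, Iso.inv_hom_id_assoc]
    rw [cancel_epi (e (q + 1)).hom]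
    ext
    · simp [triMat]
    · simp only [triMat]
      simp [Preadditive.comp_sub, Preadditive.sub_comp]
      rw [P2 q, R1 q]
      simp [Preadditive.comp_sub, Preadditive.sub_comp]
      abel
    · simp only [triMat]
      simp [Preadditive.comp_sub, Preadditive.sub_comp]
  · -- g is a chain map
    intro p
    rw [hdY p, hg (p + 1), hg p, hdmat p]
    rw [← cancel_mono (e (p + 1)).hom]
    simp only [Category.assoc, Iso.inv_hom_id, Category.comp_id, Iso.inv_hom_id_assoc]
    ext
    · simp only [triMat]
      simp [Preadditive.comp_sub, Preadditive.sub_comp]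
      rw [R3 p, R1 p]
      simp [Preadditive.comp_sub, Preadditive.sub_comp]
      abel
    · simp [triMat, Preadditive.comp_sub, Preadditive.sub_comp]
    · simp [triMat, Preadditive.comp_sub, Preadditive.sub_comp]
  · -- g ≫ f = 𝟙
    intro p
    rw [hg p, hf p]
    simp [Preadditive.comp_sub, Preadditive.sub_comp]
  · -- homotopy identity
    intro p
    obtain ⟨q, rfl⟩ : ∃ q, p = q + 1 := ⟨p - 1, by ring⟩
    have gen5 : ∀ (r : ℤ), r = q → ∀ (h1 : X.X (q + 1) = X.X (r + 1)),
        eqToHom h1 ≫ h r ≫ X.d r (q + 1) = h q ≫ X.d q (q + 1) := by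
      rintro r rfl h1; simp
    rw [hF q, hg (q + 1), gen5 (q + 1 - 1) (by ring), hh (q + 1), hh q,
      hdmat (q + 1)]
    have hdq : X.d q (q + 1) = (e q).hom ≫ triMat (fvv q) (dwv q) (dyv q) (fvw q) (fww q)
        (fyw q) (fvy q) (dwy q) (dyy q) ≫ (e (q + 1)).inv := hdmat q
    rw [hdq]
    rw [← cancel_epi (e (q + 1)).inv, ← cancel_mono (e (q + 1)).hom]
    simp only [Category.assoc, Iso.inv_hom_id, Category.comp_id, Iso.inv_hom_id_assoc,
      Iso.hom_inv_id_assoc, Preadditive.comp_sub, Preadditive.sub_comp,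
      Preadditive.comp_add, Preadditive.add_comp]
    ext <;>
      simp [triMat, Preadditive.comp_sub, Preadditive.sub_comp, R1 q, P1 q]
  · -- h ≫ f = 0
    intro p
    rw [hh p, hf p]
    simp [Preadditive.comp_sub, Preadditive.sub_comp]
  · -- g ≫ h = 0
    intro p
    rw [hg (p + 1), hh p]
    simp [Preadditive.comp_sub, Preadditive.sub_comp]
  · -- h ≫ h = 0
    intro p
    rw [hh (p + 1), hh p]
    simp
end

section
/- Five-lemma comparison for filtered objects in triangulated categories: Let Φ: C → D be an additive functor between triangulated categories commuting with translation and sending distinguished triangles to distinguished triangles. Let X, Y be objects of C equipped with finite decreasing filtrations F^i X, F^i Y (with F^i = everything for i << 0, F^i = 0 for i >> 0) and distinguished triangles F^{i+1}X → F^i X → X^i → T F^{i+1}X and similarly for Y. If Hom_C(X^i, Y^j) → Hom_D(Φ X^i, Φ Y^j) is surjective and Hom_C(X^i, T Y^j) → Hom_D(Φ X^i, Φ(T Y^j)) is injective for all i, j, then Hom_C(X, Y) → Hom_D(Φ X, Φ Y) is surjective. -/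
open CategoryTheory CategoryTheory.Limits CategoryTheory.Pretriangulated

/-!
Fix a graded piece `X^i` of the source. Descending induction along the filtration of `Y`, using
the four lemma on the long exact sequences of `Hom(X^i, -)` for the triangles
`F^{j+1}Y → F^jY → Y^j → T F^{j+1}Y`, shows that `Φ` is surjective on `Hom(X^i, F^jY)` and
injective on `Hom(X^i, T F^jY)` for every `j`. Shifting the latter to injectivity on
`Hom(T⁻¹X^i, Y)`, a second descending induction along the filtration of `X`, now with the long
exact sequences of `Hom(-, Y)`, gives surjectivity on `Hom(F^iX, Y)` for every `i`.
-/

theorem Int.forall_of_forall_ge_of_succ {P : ℤ → Prop} {b : ℤ} (base : ∀ i ≥ b, P i)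
    (step : ∀ i, P (i + 1) → P i) (i : ℤ) : P i := by
  obtain h | h := le_total b i
  · exact base i h
  · induction i, h using Int.leInductionDown with
    | base => exact base b le_rfl
    | pred n _ ih => exact step _ (by rwa [sub_add_cancel])

namespace CategoryTheory.Functor

variable {C D : Type*} [Category C] [Category D] [Preadditive C] [Preadditive D]
    (Φ : C ⥤ D) [Φ.Additive]

lemma eq_zero_of_map_eq_zero {A B : C} (h : Function.Injective (Φ.map : (A ⟶ B) → _))
    {φ : A ⟶ B} (hφ : Φ.map φ = 0) : φ = 0 :=
  h (by rw [hφ, Φ.map_zero])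

variable [HasShift C ℤ] [HasShift D ℤ] [Φ.CommShift ℤ]

lemma injective_map_from_shift_neg_one {A B : C}
    (h : Function.Injective (Φ.map : (A ⟶ B⟦(1 : ℤ)⟧) → _)) :
    Function.Injective (Φ.map : (A⟦(-1 : ℤ)⟧ ⟶ B) → _) := by
  refine (injective_iff_map_eq_zero Φ.mapAddHom).2 fun φ hφ => ?_
  change Φ.map φ = 0 at hφ
  have hshift : Φ.map (φ⟦(1 : ℤ)⟧') = 0 := by
    rw [← cancel_mono ((Φ.commShiftIso (1 : ℤ)).hom.app B), Φ.commShiftIso_hom_naturality,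
      hφ, Functor.map_zero, comp_zero, zero_comp]
  let e := (shiftFunctorCompIsoId C (-1 : ℤ) 1 (by norm_num)).app A
  have : e.inv ≫ φ⟦(1 : ℤ)⟧' = 0 :=
    Φ.eq_zero_of_map_eq_zero h (by rw [Φ.map_comp, hshift, comp_zero])
  rw [Iso.inv_comp_eq, comp_zero] at this
  exact (shiftFunctor C (1 : ℤ)).map_injective (by rw [this, Functor.map_zero])

variable [HasZeroObject C] [HasZeroObject D]
    [∀ n : ℤ, (shiftFunctor C n).Additive] [∀ n : ℤ, (shiftFunctor D n).Additive]
    [Pretriangulated C] [Pretriangulated D] [Φ.IsTriangulated]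

section Triangle

variable (T : Triangle C) (hT : T ∈ distTriang C)
include hT

lemma surjective_map_to_obj₂_of_distTriang {A : C}
    (h₁ : Function.Surjective (Φ.map : (A ⟶ T.obj₁) → _))
    (h₃ : Function.Surjective (Φ.map : (A ⟶ T.obj₃) → _))
    (h₄ : Function.Injective (Φ.map : (A ⟶ T.obj₁⟦(1 : ℤ)⟧) → _)) :
    Function.Surjective (Φ.map : (A ⟶ T.obj₂) → _) := by
  intro β
  obtain ⟨γ, hγ⟩ := h₃ (β ≫ Φ.map T.mor₂)
  obtain ⟨δ, rfl⟩ := T.coyoneda_exact₃ hT γ <| Φ.eq_zero_of_map_eq_zero h₄ <| by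
    rw [Φ.map_comp, hγ, Category.assoc, ← Φ.map_comp, comp_distTriang_mor_zero₂₃ _ hT,
      Φ.map_zero, comp_zero]
  obtain ⟨ε, hε⟩ := (Φ.mapTriangle.obj T).coyoneda_exact₂ (Φ.map_distinguished _ hT)
    (β - Φ.map δ) (by
      change _ ≫ Φ.map T.mor₂ = 0
      rw [Preadditive.sub_comp, ← Φ.map_comp, ← hγ, sub_self])
  obtain ⟨e, rfl⟩ := h₁ ε
  refine ⟨δ + e ≫ T.mor₁, ?_⟩
  change β - Φ.map δ = Φ.map e ≫ Φ.map T.mor₁ at hε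
  rw [Φ.map_add, Φ.map_comp, ← hε, add_sub_cancel]

lemma injective_map_to_obj₃_of_distTriang {A : C}
    (h₁ : Function.Surjective (Φ.map : (A ⟶ T.obj₁) → _))
    (h₂ : Function.Injective (Φ.map : (A ⟶ T.obj₂) → _))
    (h₄ : Function.Injective (Φ.map : (A ⟶ T.obj₁⟦(1 : ℤ)⟧) → _)) :
    Function.Injective (Φ.map : (A ⟶ T.obj₃) → _) := by
  refine (injective_iff_map_eq_zero Φ.mapAddHom).2 fun x hx => ?_
  change Φ.map x = 0 at hx
  obtain ⟨y, rfl⟩ := T.coyoneda_exact₃ hT x <| Φ.eq_zero_of_map_eq_zero h₄ <| by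
    rw [Φ.map_comp, hx, zero_comp]
  obtain ⟨z, hz⟩ := (Φ.mapTriangle.obj T).coyoneda_exact₂ (Φ.map_distinguished _ hT)
    (Φ.map y) (by change _ ≫ Φ.map T.mor₂ = 0; rw [← Φ.map_comp, hx])
  obtain ⟨z, rfl⟩ := h₁ z
  change Φ.map y = Φ.map z ≫ Φ.map T.mor₁ at hz
  rw [← Φ.map_comp] at hz
  rw [h₂ hz, Category.assoc, comp_distTriang_mor_zero₁₂ _ hT, comp_zero]

lemma surjective_map_from_obj₂_of_distTriang {B : C}
    (h₁ : Function.Surjective (Φ.map : (T.obj₁ ⟶ B) → _))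
    (h₃ : Function.Surjective (Φ.map : (T.obj₃ ⟶ B) → _))
    (h₀ : Function.Injective (Φ.map : (T.obj₃⟦(-1 : ℤ)⟧ ⟶ B) → _)) :
    Function.Surjective (Φ.map : (T.obj₂ ⟶ B) → _) := by
  intro β
  obtain ⟨α, hα⟩ := h₁ (Φ.map T.mor₁ ≫ β)
  have hT' := inv_rot_of_distTriang _ hT
  obtain ⟨γ, rfl⟩ : ∃ γ : T.obj₂ ⟶ B, α = T.mor₁ ≫ γ :=
    T.invRotate.yoneda_exact₂ hT' α <| Φ.eq_zero_of_map_eq_zero h₀ <| by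
      erw [Φ.map_comp, hα, ← Category.assoc, ← Φ.map_comp,
        comp_distTriang_mor_zero₁₂ _ hT', Φ.map_zero, zero_comp]
  obtain ⟨δ, hδ⟩ := (Φ.mapTriangle.obj T).yoneda_exact₂ (Φ.map_distinguished _ hT)
    (β - Φ.map γ) (by
      change Φ.map T.mor₁ ≫ _ = 0
      rw [Preadditive.comp_sub, ← Φ.map_comp, ← hα, sub_self])
  obtain ⟨d, rfl⟩ := h₃ δ
  refine ⟨γ + T.mor₂ ≫ d, ?_⟩
  change β - Φ.map γ = Φ.map T.mor₂ ≫ Φ.map d at hδ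
  rw [Φ.map_add, Φ.map_comp, ← hδ, add_sub_cancel]

end Triangle

section Filtration

variable {F G : ℤ → C} {f : ∀ i, F (i + 1) ⟶ F i} {u : ∀ i, F i ⟶ G i}
  {w : ∀ i, G i ⟶ (F (i + 1))⟦(1 : ℤ)⟧}
  (hT : ∀ i, Triangle.mk (f i) (u i) (w i) ∈ distTriang C) {b : ℤ} (hb : ∀ i ≥ b, IsZero (F i))
include hT hb

lemma surjective_injective_map_to_filtration {A : C}
    (hs : ∀ i, Function.Surjective (Φ.map : (A ⟶ G i) → _))
    (hi : ∀ i, Function.Injective (Φ.map : (A ⟶ (G i)⟦(1 : ℤ)⟧) → _)) (i : ℤ) :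
    Function.Surjective (Φ.map : (A ⟶ F i) → _) ∧
      Function.Injective (Φ.map : (A ⟶ (F i)⟦(1 : ℤ)⟧) → _) := by
  induction i using Int.forall_of_forall_ge_of_succ (b := b) with
  | base i hbi =>
    exact ⟨fun _ => ⟨0, (Φ.map_isZero (hb i hbi)).eq_of_tgt _ _⟩,
      fun _ _ _ => ((shiftFunctor C (1 : ℤ)).map_isZero (hb i hbi)).eq_of_tgt _ _⟩
  | step i ih =>
    -- the twice rotated triangle is `G i ⟶ (F (i + 1))⟦1⟧ ⟶ (F i)⟦1⟧ ⟶ (G i)⟦1⟧`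
    exact ⟨Φ.surjective_map_to_obj₂_of_distTriang _ (hT i) ih.1 (hs i) ih.2,
      Φ.injective_map_to_obj₃_of_distTriang _
        (rot_of_distTriang _ (rot_of_distTriang _ (hT i))) (hs i) ih.2 (hi i)⟩

lemma surjective_map_from_filtration {B : C}
    (hs : ∀ i, Function.Surjective (Φ.map : (G i ⟶ B) → _))
    (hi : ∀ i, Function.Injective (Φ.map : ((G i)⟦(-1 : ℤ)⟧ ⟶ B) → _)) (i : ℤ) :
    Function.Surjective (Φ.map : (F i ⟶ B) → _) := by
  induction i using Int.forall_of_forall_ge_of_succ (b := b) with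
  | base i hbi => exact fun _ => ⟨0, (Φ.map_isZero (hb i hbi)).eq_of_src _ _⟩
  | step i ih => exact Φ.surjective_map_from_obj₂_of_distTriang _ (hT i) ih (hs i) (hi i)

end Filtration

end CategoryTheory.Functor

/-- five-lemma comparison for filtered objects in triangulated categories.
Let `Φ : C → D` be an additive functor between triangulated categories commuting with
translation and sending distinguished triangles to distinguished triangles.  Let `X, Y`
be objects of `C` with finite decreasing filtrations `F^i X` (with `F^i X = X` for
`i ≤ a`, expressed by the transition maps being isomorphisms below `a`, and `F^i X = 0`
for large `i`) together with distinguished triangles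
`F^{i+1}X → F^i X → X^i → T F^{i+1}X`, and similarly for `Y`.  If
`Hom_C(X^i, Y^j) → Hom_D(Φ X^i, Φ Y^j)` is surjective and
`Hom_C(X^i, T Y^j) → Hom_D(Φ X^i, Φ (T Y^j))` is injective for all `i, j`, then
`Hom_C(X, Y) → Hom_D(Φ X, Φ Y)` is surjective (where `X = F^a X`, `Y = F^{a'} Y`). -/
theorem statement16 {C D : Type*} [Category C] [Category D]
    [HasShift C ℤ] [HasShift D ℤ] [Preadditive C] [Preadditive D]
    [HasZeroObject C] [HasZeroObject D]
    [∀ n : ℤ, (shiftFunctor C n).Additive] [∀ n : ℤ, (shiftFunctor D n).Additive]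
    [Pretriangulated C] [Pretriangulated D]
    (Φ : C ⥤ D) [Φ.Additive] [Φ.CommShift ℤ] [Φ.IsTriangulated]
    -- the filtration of `X`, with graded pieces `GX i`
    (FX : ℤ → C) (fX : ∀ i : ℤ, FX (i + 1) ⟶ FX i) (GX : ℤ → C)
    (uX : ∀ i : ℤ, FX i ⟶ GX i) (wX : ∀ i : ℤ, GX i ⟶ (FX (i + 1))⟦(1 : ℤ)⟧)
    (hX : ∀ i : ℤ, Triangle.mk (fX i) (uX i) (wX i) ∈ distinguishedTriangles)
    (a : ℤ) (haX : ∀ i < a, IsIso (fX i))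
    (hbX : ∃ b : ℤ, ∀ i ≥ b, IsZero (FX i))
    -- the filtration of `Y`, with graded pieces `GY j`
    (FY : ℤ → C) (fY : ∀ j : ℤ, FY (j + 1) ⟶ FY j) (GY : ℤ → C)
    (uY : ∀ j : ℤ, FY j ⟶ GY j) (wY : ∀ j : ℤ, GY j ⟶ (FY (j + 1))⟦(1 : ℤ)⟧)
    (hY : ∀ j : ℤ, Triangle.mk (fY j) (uY j) (wY j) ∈ distinguishedTriangles)
    (a' : ℤ) (haY : ∀ j < a', IsIso (fY j))
    (hbY : ∃ b : ℤ, ∀ j ≥ b, IsZero (FY j))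
    -- the comparison hypotheses on the graded pieces
    (hsurj : ∀ i j : ℤ, Function.Surjective (fun φ : GX i ⟶ GY j => Φ.map φ))
    (hinj : ∀ i j : ℤ,
      Function.Injective (fun φ : GX i ⟶ (GY j)⟦(1 : ℤ)⟧ => Φ.map φ)) :
    Function.Surjective (fun φ : FX a ⟶ FY a' => Φ.map φ) := by
  obtain ⟨bX, hbX⟩ := hbX
  obtain ⟨bY, hbY⟩ := hbY
  have hGX (i : ℤ) := Φ.surjective_injective_map_to_filtration hY hbY (hsurj i) (hinj i) a'
  exact Φ.surjective_map_from_filtration hX hbX (fun i => (hGX i).1)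
    (fun i => Φ.injective_map_from_shift_neg_one (hGX i).2) a
end
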